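/- arXiv:1004.4781 — 2 statements merged into one kernel-verified Lean document; each statement's English description precedes it below -/
import Mathlib

section
/- (Kronecker's theorem) Let α be an algebraic integer all of whose Galois conjugates (including α itself) have complex absolute value equal to 1. Then α is a root of unity. -/
/-!
The powers of `α` are algebraic integers of the number field `ℚ(α)` all of whose conjugates have
absolute value `1`. Their minimal polynomials have bounded degree and bounded integer coefficients,
so there are only finitely many of them; hence `α ^ a = α ^ b` for some `a < b`.
-/

open NumberField IntermediateField Polynomial

-- `ℚ⟮α⟯` carries the `ℚ`-algebra structure induced from `A`, whereas `NumberField` asks for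
-- the canonical one; the two agree since `ℚ`-algebra structures are unique.
theorem IsIntegral.numberField_adjoin {A : Type*} [Field A] [Algebra ℚ A] {α : A}
    (hα : IsIntegral ℚ α) : NumberField ℚ⟮α⟯ := by
  refine { to_charZero := inferInstance, to_finiteDimensional := ?_ }
  rw [Subsingleton.elim (α := Algebra ℚ ℚ⟮α⟯) DivisionRing.toRatAlgebra ℚ⟮α⟯.algebra']
  exact adjoin.finiteDimensional hα

theorem IsIntegral.exists_pow_eq_one_of_forall_root_minpoly_norm_eq_one {A : Type*}
    [NormedField A] [IsAlgClosed A] [NormedAlgebra ℚ A] {α : A} (hα : IsIntegral ℤ α)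
    (hconj : ∀ β : A, aeval β (minpoly ℤ α) = 0 → ‖β‖ = 1) :
    ∃ n : ℕ, 0 < n ∧ α ^ n = 1 := by
  have : NumberField ℚ⟮α⟯ := (hα.tower_top (A := ℚ)).numberField_adjoin
  set x := AdjoinSimple.gen ℚ α
  have hx_integral : IsIntegral ℤ x := by
    rwa [← isIntegral_algebraMap_iff (algebraMap ℚ⟮α⟯ A).injective, AdjoinSimple.algebraMap_gen]
  have hminpoly : minpoly ℤ x = minpoly ℤ α := by
    rw [← minpoly.algebraMap_eq (algebraMap ℚ⟮α⟯ A).injective x, AdjoinSimple.algebraMap_gen]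
  have hx_norm (φ : ℚ⟮α⟯ →+* A) : ‖φ x‖ = 1 :=
    hconj _ (hminpoly ▸ minpoly.aeval_algHom ℤ φ.toIntAlgHom x)
  obtain ⟨n, hn, hxn⟩ := Embeddings.pow_eq_one_of_norm_eq_one ℚ⟮α⟯ A hx_integral hx_norm
  exact ⟨n, hn, by simpa [x] using congrArg (algebraMap ℚ⟮α⟯ A) hxn⟩

/-- Kronecker's theorem: an algebraic integer all of whose Galois conjugates
(roots of its minimal polynomial over ℚ, including itself) have absolute value `1`
is a root of unity. -/
theorem stmt4 (α : ℂ) (hint : IsIntegral ℤ α)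
    (hconj : ∀ β : ℂ, Polynomial.aeval β (minpoly ℤ α) = 0 → ‖β‖ = 1) :
    ∃ m : ℕ, 1 ≤ m ∧ α ^ m = 1 :=
  hint.exists_pow_eq_one_of_forall_root_minpoly_norm_eq_one hconj
end

section
/- (Burnside) Let G be a subgroup of GLₙ(ℂ) such that every element g ∈ G satisfies g^s = 1 for a fixed integer s ≥ 1. Then G is finite. -/
/-!
Burnside's argument. Every element of `G` has eigenvalues among the `s`-th roots of unity, so
the traces of elements of `G` range over the finite set of sums of `n` such roots. If
`tr (g₁ u) = tr (g₂ u)` for all `u ∈ G`, then `v = g₁ g₂⁻¹` satisfies `tr (v ^ k) = n` for all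
`k`; the average `(1 / s) ∑_{k < s} v ^ k` is then an idempotent of trace `n`, hence `1`, and
`v` fixes it, so `v = 1`. Fixing finitely many elements `x` of `G` spanning the linear span of
`G`, the map `g ↦ (tr (g x))_x` is therefore injective on `G` with values in a finite set.
-/

open Matrix Polynomial

namespace Matrix

variable {ι K : Type*} [Fintype ι] [DecidableEq ι] [Field K]

theorem pow_eq_one_of_isRoot_charpoly {A : Matrix ι ι K} {s : ℕ} (hA : A ^ s = 1) {μ : K}
    (hμ : A.charpoly.IsRoot μ) : μ ^ s = 1 := by
  have hμs := spectrum.pow_mem_pow A s (mem_spectrum_iff_isRoot_charpoly.mpr hμ)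
  rw [hA, spectrum.mem_iff, ← map_one (algebraMap K _), ← map_sub] at hμs
  by_contra hne
  exact hμs ((sub_ne_zero.mpr hne).isUnit.map _)

theorem trace_mem_image_sym_nthRootsFinset [IsAlgClosed K] [DecidableEq K] {A : Matrix ι ι K}
    {s : ℕ} (hs : 0 < s) (hA : A ^ s = 1) :
    A.trace ∈ ((nthRootsFinset s (1 : K)).sym (Fintype.card ι)).image
      fun m : Sym K (Fintype.card ι) => (m : Multiset K).sum := by
  refine Finset.mem_image.mpr ⟨⟨A.charpoly.roots, ?_⟩, Finset.mem_sym_iff.mpr fun μ hμ => ?_,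
    (trace_eq_sum_roots_charpoly A).symm⟩
  · rw [IsAlgClosed.card_roots_eq_natDegree, charpoly_natDegree_eq_dim]
  · exact (mem_nthRootsFinset hs 1).mpr (pow_eq_one_of_isRoot_charpoly hA (isRoot_of_mem_roots hμ))

theorem eq_one_of_isIdempotentElem_of_trace_eq_card [CharZero K] {P : Matrix ι ι K}
    (hP : IsIdempotentElem P) (htr : P.trace = Fintype.card ι) : P = 1 := by
  have hQ : IsIdempotentElem (toLin' (1 - P)) := by
    rw [IsIdempotentElem, Module.End.mul_eq_comp, ← toLin'_mul, hP.one_sub.eq]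
  have h0 := LinearMap.IsIdempotentElem.eq_zero_of_trace_eq_zero hQ <| by
    rw [trace_toLin'_eq, trace_sub, trace_one, htr, sub_self]
  rw [LinearEquiv.map_eq_zero_iff, sub_eq_zero] at h0
  exact h0.symm

theorem eq_one_of_pow_eq_one_of_trace_pow_eq_card [CharZero K] {A : Matrix ι ι K} {s : ℕ}
    (hs : 0 < s) (hA : A ^ s = 1) (htr : ∀ k, (A ^ k).trace = Fintype.card ι) : A = 1 := by
  set P : Matrix ι ι K := (s : K)⁻¹ • ∑ k ∈ Finset.range s, A ^ k with hP
  have hs0 : (s : K) ≠ 0 := Nat.cast_ne_zero.mpr hs.ne'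
  have hAP : A * P = P := by
    have := mul_geom_sum A s
    rw [hA, sub_self, sub_mul, one_mul, sub_eq_zero] at this
    rw [hP, mul_smul_comm, this]
  have hAkP : ∀ k, A ^ k * P = P := by
    intro k
    induction k with
    | zero => rw [pow_zero, one_mul]
    | succ k ih => rw [pow_succ, mul_assoc, hAP, ih]
  have hPP : IsIdempotentElem P := by
    unfold IsIdempotentElem
    nth_rw 1 [hP]
    rw [smul_mul_assoc, Finset.sum_mul, Finset.sum_congr rfl fun k _ => hAkP k,
      Finset.sum_const, Finset.card_range, ← Nat.cast_smul_eq_nsmul K, smul_smul,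
      inv_mul_cancel₀ hs0, one_smul]
  have htrP : P.trace = Fintype.card ι := by
    rw [hP, trace_smul, trace_sum, Finset.sum_congr rfl fun k _ => htr k, Finset.sum_const,
      Finset.card_range, nsmul_eq_mul, smul_eq_mul, ← mul_assoc, inv_mul_cancel₀ hs0, one_mul]
  rwa [eq_one_of_isIdempotentElem_of_trace_eq_card hPP htrP, mul_one] at hAP

namespace GeneralLinearGroup

theorem trace_pow_eq_card_of_forall_trace_mul_eq {G : Subgroup (GL ι K)} {g : GL ι K}
    (hg : g ∈ G) (htr : ∀ u ∈ G, (g * u : Matrix ι ι K).trace = (u : Matrix ι ι K).trace)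
    (k : ℕ) : ((g : Matrix ι ι K) ^ k).trace = Fintype.card ι := by
  induction k with
  | zero => rw [pow_zero, trace_one]
  | succ k ih =>
    rw [pow_succ', ← Units.val_pow_eq_pow_val, htr _ (G.pow_mem hg k), Units.val_pow_eq_pow_val,
      ih]

theorem eq_of_forall_trace_mul_eq [CharZero K] {G : Subgroup (GL ι K)} {s : ℕ} (hs : 0 < s)
    (hexp : ∀ g ∈ G, g ^ s = 1) {g₁ g₂ : GL ι K} (h₁ : g₁ ∈ G) (h₂ : g₂ ∈ G)
    (htr : ∀ u ∈ G, (g₁ * u : Matrix ι ι K).trace = (g₂ * u : Matrix ι ι K).trace) :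
    g₁ = g₂ := by
  have hv : g₁ * g₂⁻¹ ∈ G := G.mul_mem h₁ (G.inv_mem h₂)
  have hvtr : ∀ u ∈ G,
      ((g₁ * g₂⁻¹ : GL ι K) * u : Matrix ι ι K).trace = (u : Matrix ι ι K).trace := by
    intro u hu
    simpa [mul_assoc] using htr _ (G.mul_mem (G.inv_mem h₂) hu)
  have hv1 : ((g₁ * g₂⁻¹ : GL ι K) : Matrix ι ι K) = 1 :=
    eq_one_of_pow_eq_one_of_trace_pow_eq_card hs
      (by rw [← Units.val_pow_eq_pow_val, hexp _ hv, Units.val_one])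
      (trace_pow_eq_card_of_forall_trace_mul_eq hv hvtr)
  exact mul_inv_eq_one.mp (Units.ext hv1)

theorem finite_trace_image_of_pow_eq_one [IsAlgClosed K] {G : Subgroup (GL ι K)} {s : ℕ}
    (hs : 0 < s) (hexp : ∀ g ∈ G, g ^ s = 1) :
    ((fun g : GL ι K => (g : Matrix ι ι K).trace) '' G).Finite := by
  classical
  refine (((nthRootsFinset s (1 : K)).sym (Fintype.card ι)).image
    fun m : Sym K (Fintype.card ι) => (m : Multiset K).sum).finite_toSet.subset ?_
  rintro _ ⟨g, hg, rfl⟩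
  exact trace_mem_image_sym_nthRootsFinset hs
    (by rw [← Units.val_pow_eq_pow_val, hexp g hg, Units.val_one])

theorem finite_of_finite_trace_image {G : Subgroup (GL ι K)}
    (hT : ((fun g : GL ι K => (g : Matrix ι ι K).trace) '' G).Finite)
    (hsep : ∀ g₁ ∈ G, ∀ g₂ ∈ G,
      (∀ u ∈ G, (g₁ * u : Matrix ι ι K).trace = (g₂ * u : Matrix ι ι K).trace) → g₁ = g₂) :
    Finite G := by
  obtain ⟨b, hbG, hspan, hb⟩ := exists_linearIndependent K (Units.val '' (G : Set (GL ι K)))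
  have : Finite b := hb.finite
  let f : GL ι K → b → K := fun g x => (g * x : Matrix ι ι K).trace
  have hmaps :
      f '' G ⊆ Set.univ.pi fun _ => (fun g : GL ι K => (g : Matrix ι ι K).trace) '' G := by
    rintro _ ⟨g, hg, rfl⟩ x -
    obtain ⟨u, hu, hux⟩ := hbG x.2
    exact ⟨g * u, G.mul_mem hg hu, by simp [f, hux]⟩
  have hinj : Set.InjOn f G := by
    intro g₁ h₁ g₂ h₂ hf
    refine hsep g₁ h₁ g₂ h₂ fun u hu => ?_
    have hu' : (u : Matrix ι ι K) ∈ Submodule.span K b :=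
      hspan ▸ Submodule.subset_span ⟨u, hu, rfl⟩
    exact LinearMap.eqOn_span
      (f := (traceLinearMap ι K K).comp (LinearMap.mulLeft K (g₁ : Matrix ι ι K)))
      (g := (traceLinearMap ι K K).comp (LinearMap.mulLeft K (g₂ : Matrix ι ι K)))
      (fun x hx => congrFun hf ⟨x, hx⟩) hu'
  exact (((Set.Finite.pi fun _ => hT).subset hmaps).of_finite_image hinj).to_subtype

end GeneralLinearGroup

end Matrix

/-- Burnside: a subgroup of `GLₙ(ℂ)` of bounded exponent `s` is finite. -/
theorem stmt6 (n : ℕ) (s : ℕ) (hs : 1 ≤ s)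
    (G : Subgroup (Matrix.GeneralLinearGroup (Fin n) ℂ))
    (hexp : ∀ g ∈ G, g ^ s = 1) :
    Finite G :=
  GeneralLinearGroup.finite_of_finite_trace_image
    (GeneralLinearGroup.finite_trace_image_of_pow_eq_one hs hexp)
    fun _ h₁ _ h₂ => GeneralLinearGroup.eq_of_forall_trace_mul_eq hs hexp h₁ h₂
end
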